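/- Consider a system of N fermionic modes realized on (ℂ²)^{⊗N} via the Jordan–Wigner operators, and let A ⊆ [N] be a subset of L modes. Let H be a 2^N × 2^N Hermitian matrix whose spectrum has non-degenerate gaps, with orthonormal eigenbasis {|j⟩}; let |φ⟩ be a unit vector, c_j := ⟨j|φ⟩, D_eff := (Σ_j |c_j|⁴)^{−1}, ρ(t) := e^{−iHt}|φ⟩⟨φ|e^{iHt}, and ρ̄ := Σ_j |c_j|² |j⟩⟨j|. Then limsup_{τ→∞} (1/τ) ∫₀^τ ‖ρ(t)_A − ρ̄_A‖₂² dt ≤ 2^L / D_eff, where ‖·‖₂ is the Frobenius (Hilbert–Schmidt) norm. -/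

import Mathlib

open MeasureTheory ProbabilityTheory Matrix Finset
open scoped Matrix ComplexOrder Classical

noncomputable section

/-- The Hilbert space basis of `N` qubits is indexed by `Fin N → Bool`. -/
abbrev QOp (N : ℕ) := Matrix (Fin N → Bool) (Fin N → Bool) ℂ

/-- Jordan–Wigner annihilation operator `a_j = Z^{⊗(j-1)} ⊗ |0⟩⟨1| ⊗ I`. -/
def aOp (N : ℕ) (j : Fin N) : QOp N := fun x y =>
  if x j = false ∧ y j = true ∧ ∀ i, i ≠ j → x i = y i then
    ∏ i ∈ Finset.univ.filter (fun i => i < j), (if y i then (-1 : ℂ) else 1)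
  else 0

/-- The vacuum state `|0…0⟩`. -/
def vac (N : ℕ) : (Fin N → Bool) → ℂ := fun x => if x = fun _ => false then 1 else 0

/-- `|φ_n⟩ = a_1† a_2† ⋯ a_n† |0⟩`. -/
def phiState (N n : ℕ) : (Fin N → Bool) → ℂ :=
  ((((List.finRange N).filter (fun j => decide (j.val < n))).map
    (fun j => (aOp N j)ᴴ)).prod) *ᵥ vac N

/-- Rank-one projector `|v⟩⟨v|`. -/
def outer (N : ℕ) (v : (Fin N → Bool) → ℂ) : QOp N := Matrix.vecMulVec v (star v)

/-- `H_SYK2 = Σ_{j,k} h_{jk} a_j† a_k`. -/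
def HSYK2 (N : ℕ) (h : Matrix (Fin N) (Fin N) ℂ) : QOp N :=
  ∑ j, ∑ k, h j k • ((aOp N j)ᴴ * aOp N k)

instance matrixMeasurableSpace {m n α : Type*} [MeasurableSpace α] :
    MeasurableSpace (Matrix m n α) := MeasurableSpace.pi

/-- The GUE measure on `N × N` complex matrices. -/
def gueMeasure (N : ℕ) : Measure (Matrix (Fin N) (Fin N) ℂ) :=
  Measure.map
    (fun p : (Fin N → ℝ) × (Fin N → Fin N → ℝ) × (Fin N → Fin N → ℝ) =>
      Matrix.of fun j k =>
        if j = k then (p.1 j : ℂ)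
        else if j < k then (p.2.1 j k : ℂ) + (p.2.2 j k : ℂ) * Complex.I
        else (p.2.1 k j : ℂ) - (p.2.2 k j : ℂ) * Complex.I)
    ((Measure.pi fun _ => gaussianReal 0 1).prod
      ((Measure.pi fun _ => Measure.pi fun _ => gaussianReal 0 (1/2)).prod
        (Measure.pi fun _ => Measure.pi fun _ => gaussianReal 0 (1/2))))

/-- Von Neumann entropy `S(ρ) = -tr(ρ ln ρ)` via eigenvalues (0 for non-Hermitian junk). -/
def vnEntropy {m : Type*} [Fintype m] [DecidableEq m] (ρ : Matrix m m ℂ) : ℝ :=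
  if hρ : ρ.IsHermitian then -∑ i, hρ.eigenvalues i * Real.log (hρ.eigenvalues i) else 0

/-- Rényi-2 entropy `S₂(ρ) = -ln tr(ρ²)`. -/
def renyi2 {m : Type*} [Fintype m] (ρ : Matrix m m ℂ) : ℝ := -Real.log ((ρ * ρ).trace.re)

/-- Rényi-α entropy. -/
def renyiEntropy {m : Type*} [Fintype m] [DecidableEq m] (α : ℝ) (ρ : Matrix m m ℂ) : ℝ :=
  if hρ : ρ.IsHermitian then
    if α = 1 then -∑ i, hρ.eigenvalues i * Real.log (hρ.eigenvalues i)
    else (1 - α)⁻¹ * Real.log (∑ i, hρ.eigenvalues i ^ α)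
  else 0

/-- Binary entropy function. -/
def binEntropy (x : ℝ) : ℝ := -x * Real.log x - (1 - x) * Real.log (1 - x)

/-- All eigenvalues (roots of the characteristic polynomial, with multiplicity) are distinct. -/
def NondegSpectrum {m : Type*} [Fintype m] [DecidableEq m] (M : Matrix m m ℂ) : Prop :=
  M.charpoly.roots.Nodup

/-- The spectrum has non-degenerate gaps. -/
def NondegGaps {m : Type*} [Fintype m] [DecidableEq m] (M : Matrix m m ℂ) : Prop :=
  M.charpoly.roots.Nodup ∧
  ∀ a ∈ M.charpoly.roots, ∀ b ∈ M.charpoly.roots, ∀ c ∈ M.charpoly.roots,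
    ∀ d ∈ M.charpoly.roots, a ≠ b → c ≠ d → a - b = c - d → a = c ∧ b = d

/-- The Jordan–Wigner image on modes `A` of the matrix unit `|y⟩⟨x|` of an `L`-mode system:
`(∏_{k : y_k = 1, increasing} a_{i_k}†) (∏_k a_{i_k} a_{i_k}†) (∏_{k : x_k = 1, decreasing} a_{i_k})`
where `i_1 < ⋯ < i_L` enumerates `A`. -/
def hatUnit (N L : ℕ) (ι : Fin L → Fin N) (y x : Fin L → Bool) : QOp N :=
  ((((List.finRange L).filter (fun k => y k)).map (fun k => (aOp N (ι k))ᴴ)).prod) *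
  (((List.finRange L).map (fun k => aOp N (ι k) * (aOp N (ι k))ᴴ)).prod) *
  (((((List.finRange L).filter (fun k => x k)).map (fun k => aOp N (ι k))).reverse).prod)

/-- The fermionic reduced density matrix of `ρ` on the set `A` of `L` modes, i.e. the unique
`2^L × 2^L` matrix with `tr(ρ_A X) = tr(ρ X̂)` for all polynomials `X` in the `L`-mode
creation/annihilation operators, `X̂` being the corresponding polynomial in `{a_j, a_j†}_{j ∈ A}`
(modes taken in increasing order). -/
def fermRDM (N L : ℕ) (A : Finset (Fin N)) (hA : A.card = L) (ρ : QOp N) :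
    Matrix (Fin L → Bool) (Fin L → Bool) ℂ :=
  fun x y => (ρ * hatUnit N L (fun k => A.orderEmbOfFin hA k) y x).trace

/-- Time evolution `e^{-iHt} v`. -/
def evolve (N : ℕ) (H : QOp N) (t : ℝ) (v : (Fin N → Bool) → ℂ) : (Fin N → Bool) → ℂ :=
  NormedSpace.exp ((-(t : ℂ) * Complex.I) • H) *ᵥ v

/-- Qubit partial trace onto the qubits in `A`. -/
def ptrace {N : ℕ} (A : Finset (Fin N)) (ρ : QOp N) :
    Matrix ({i // i ∈ A} → Bool) ({i // i ∈ A} → Bool) ℂ :=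
  fun x y => ∑ z : {i : Fin N // i ∉ A} → Bool,
    ρ (fun i => if h : i ∈ A then x ⟨i, h⟩ else z ⟨i, h⟩)
      (fun i => if h : i ∈ A then y ⟨i, h⟩ else z ⟨i, h⟩)


/-- Squared Frobenius (Hilbert–Schmidt) norm. -/
def frobSq {m : Type*} [Fintype m] (M : Matrix m m ℂ) : ℝ :=
  ∑ x, ∑ y, ‖M x y‖ ^ 2

/-!
In the eigenbasis, `ρ(t) - ρ̄ = ∑_{j ≠ k} c_j c̄_k e^{i (E_k - E_j) t} |j⟩⟨k|`. Since the gaps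
`E_k - E_j` are pairwise distinct, the time average of the squared Frobenius norm of the (linear)
fermionic reduction of this sum converges to `∑_{j ≠ k} |c_j|² |c_k|² ‖(|j⟩⟨k|)_A‖₂²`.

Entry `(x, y)` of `(|j⟩⟨k|)_A` is `⟨k| X̂ |j⟩`, where `X̂ = X̂_{yx}` is the Jordan–Wigner image of
a matrix unit: up to phases, `X̂` maps the basis states with occupation `x` on `A` bijectively
onto those with occupation `y` and kills all others. Extending the sum to all `j, k`,
`∑_{j,k} |c_j|² |c_k|² |⟨k| X̂ |j⟩|² = tr ((X̂ ρ̄)ᴴ (ρ̄ X̂)) ≤ (‖X̂ ρ̄‖₂² + ‖ρ̄ X̂‖₂²) / 2`, and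
`‖X̂ ρ̄‖₂²`, `‖ρ̄ X̂‖₂²` are the squared norms of the rows of `ρ̄` in sector `x`, resp. of its
columns in sector `y`. Summing over the `2^L × 2^L` pairs `(x, y)` gives
`2^L ‖ρ̄‖₂² = 2^L ∑_j |c_j|⁴`.
-/

open Filter Topology Complex ComplexConjugate

section FrobeniusNorm

variable {m κ : Type*} [Fintype m]

lemma frobSq_nonneg (M : Matrix m m ℂ) : 0 ≤ frobSq M := by
  unfold frobSq; positivity

lemma frobSq_transpose (M : Matrix m m ℂ) : frobSq Mᵀ = frobSq M :=
  Finset.sum_comm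

lemma frobSq_eq_re_trace_mul_conjTranspose (M : Matrix m m ℂ) :
    frobSq M = (M * Mᴴ).trace.re := by
  simp only [frobSq, trace, Matrix.diag, mul_apply, conjTranspose_apply, re_sum,
    ← normSq_eq_norm_sq, RCLike.star_def, mul_conj, ofReal_re]

lemma re_trace_conjTranspose_mul_le (A B : Matrix m m ℂ) :
    (Aᴴ * B).trace.re ≤ (frobSq A + frobSq B) / 2 := by
  simp only [frobSq, trace, Matrix.diag, mul_apply, conjTranspose_apply, re_sum]
  rw [Finset.sum_comm (f := fun x y => ‖A x y‖ ^ 2), Finset.sum_comm (f := fun x y => ‖B x y‖ ^ 2),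
    ← Finset.sum_add_distrib, Finset.sum_div]
  refine Finset.sum_le_sum fun x _ => ?_
  rw [← Finset.sum_add_distrib, Finset.sum_div]
  refine Finset.sum_le_sum fun y _ => ?_
  calc (star (A y x) * B y x).re ≤ ‖A y x‖ * ‖B y x‖ := by
        simpa using re_le_norm (star (A y x) * B y x)
    _ ≤ (‖A y x‖ ^ 2 + ‖B y x‖ ^ 2) / 2 := by nlinarith [sq_nonneg (‖A y x‖ - ‖B y x‖)]

lemma frobSq_sum_smul (P : Finset κ) (a : κ → ℂ) (R : κ → Matrix m m ℂ) :
    frobSq (∑ p ∈ P, a p • R p) =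
      (∑ q ∈ P ×ˢ P, a q.1 * conj (a q.2) * (R q.1 * (R q.2)ᴴ).trace).re := by
  simp only [frobSq_eq_re_trace_mul_conjTranspose, conjTranspose_sum, conjTranspose_smul,
    Finset.sum_mul, Finset.mul_sum, smul_mul_smul, trace_sum, trace_smul, smul_eq_mul,
    Finset.sum_product, RCLike.star_def]
  rw [Finset.sum_comm]

lemma frobSq_sum_smul_vecMulVec_of_orthonormal [Fintype κ] [DecidableEq κ] {v : κ → m → ℂ}
    (horth : ∀ j j', star (v j) ⬝ᵥ v j' = if j = j' then (1 : ℂ) else 0) (p : κ → ℝ) :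
    frobSq (∑ j, (p j : ℂ) • vecMulVec (v j) (star (v j))) = ∑ j, p j ^ 2 := by
  rw [frobSq_sum_smul, Finset.sum_product, re_sum]
  refine Finset.sum_congr rfl fun j _ => ?_
  simp only [conjTranspose_vecMulVec, star_star, vecMulVec_mul_vecMulVec, trace_vecMulVec,
    dotProduct_smul, smul_eq_mul, horth, dotProduct_comm (v j) (star _), mul_ite, mul_one,
    mul_zero, conj_ofReal]
  simp [sq]

lemma trace_vecMulVec_mul_conjTranspose_mul_vecMulVec_mul (a b : m → ℂ) (X : Matrix m m ℂ) :
    (vecMulVec a (star a) * (Xᴴ * (vecMulVec b (star b) * X))).trace =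
      (‖(vecMulVec a (star b) * X).trace‖ ^ 2 : ℝ) := by
  rw [← Matrix.mul_assoc, ← Matrix.mul_assoc, vecMulVec_mul, vecMulVec_mul_vecMulVec,
    vecMulVec_mul, trace_vecMulVec, vecMulVec_mul, trace_vecMulVec,
    dotProduct_comm a (star b ᵥ* X), ← normSq_eq_norm_sq, ← mul_conj, smul_vecMul,
    dotProduct_smul, smul_eq_mul, mul_comm, dotProduct_comm a, ← star_mulVec, star_dotProduct,
    dotProduct_mulVec]
  rfl

lemma re_trace_conjTranspose_mul_eq_sum_sum [Fintype κ] (p : κ → ℝ) (v : κ → m → ℂ)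
    (X : Matrix m m ℂ) :
    ((X * ∑ j, (p j : ℂ) • vecMulVec (v j) (star (v j)))ᴴ *
        ((∑ j, (p j : ℂ) • vecMulVec (v j) (star (v j))) * X)).trace.re =
      ∑ j, ∑ k, p j * p k * ‖(vecMulVec (v j) (star (v k)) * X).trace‖ ^ 2 := by
  simp only [conjTranspose_mul, conjTranspose_sum, conjTranspose_smul, conjTranspose_vecMulVec,
    star_star, RCLike.star_def, conj_ofReal, Matrix.sum_mul, Matrix.mul_sum, Matrix.smul_mul,
    Matrix.mul_smul, Matrix.mul_assoc, trace_sum, trace_smul, smul_eq_mul, re_sum]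
  simp only [trace_vecMulVec_mul_conjTranspose_mul_vecMulVec_mul, ← ofReal_mul, ← ofReal_sum,
    ofReal_re, Finset.mul_sum]
  rw [Finset.sum_comm]
  exact Finset.sum_congr rfl fun j _ => Finset.sum_congr rfl fun k _ => by ring

end FrobeniusNorm

section TimeAverage

lemma norm_exp_ofReal_mul_I_mul (ω t : ℝ) : ‖cexp (ω * I * t)‖ = 1 := by
  rw [show (ω : ℂ) * I * t = ((ω * t : ℝ) : ℂ) * I by push_cast; ring, norm_exp_ofReal_mul_I]

lemma exp_mul_I_mul_conj (a b t : ℝ) :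
    cexp (a * I * t) * conj (cexp (b * I * t)) = cexp ((a - b : ℝ) * I * t) := by
  rw [← Complex.exp_conj, ← Complex.exp_add]
  congr 1
  simp only [map_mul, conj_ofReal, conj_I]
  push_cast
  ring

lemma tendsto_average_exp_mul_I (ω : ℝ) :
    Tendsto (fun τ : ℝ => (1 / τ : ℂ) * ∫ t in (0:ℝ)..τ, cexp (ω * I * t)) atTop
      (𝓝 (if ω = 0 then 1 else 0)) := by
  split_ifs with hω
  · subst hω
    refine tendsto_const_nhds.congr' ?_
    filter_upwards [eventually_ne_atTop 0] with τ hτ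
    simp [hτ]
  · have hc : (ω : ℂ) * I ≠ 0 := mul_ne_zero (ofReal_ne_zero.mpr hω) I_ne_zero
    -- the integral is bounded by `2 / |ω|`
    refine squeeze_zero_norm' (a := fun τ => 2 / ‖(ω : ℂ) * I‖ * τ⁻¹) ?_ ?_
    · filter_upwards [eventually_gt_atTop 0] with τ hτ
      rw [integral_exp_mul_complex hc, norm_mul, norm_div, norm_div, norm_one, norm_real,
        Real.norm_of_nonneg hτ.le, one_div, mul_comm]
      gcongr
      calc ‖cexp (ω * I * τ) - cexp (ω * I * (0:ℝ))‖
          ≤ ‖cexp (ω * I * τ)‖ + ‖cexp (ω * I * (0:ℝ))‖ := norm_sub_le _ _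
        _ = 2 := by rw [norm_exp_ofReal_mul_I_mul, norm_exp_ofReal_mul_I_mul]; norm_num
    · simpa using tendsto_inv_atTop_zero.const_mul (2 / ‖(ω : ℂ) * I‖)

lemma tendsto_average_re_sum_mul_exp {κ : Type*} (K : Finset κ) (C : κ → ℂ) (ν : κ → ℝ) :
    Tendsto (fun τ : ℝ => (1 / τ) * ∫ t in (0:ℝ)..τ, (∑ k ∈ K, C k * cexp (ν k * I * t)).re)
      atTop (𝓝 (∑ k ∈ K, if ν k = 0 then C k else 0).re) := by
  have hlim : Tendsto (fun τ : ℝ => ∑ k ∈ K, C k * ((1 / τ : ℂ) * ∫ t in (0:ℝ)..τ,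
      cexp (ν k * I * t))) atTop (𝓝 (∑ k ∈ K, if ν k = 0 then C k else 0)) := by
    refine tendsto_finsetSum K fun k _ => ?_
    simpa using (tendsto_average_exp_mul_I (ν k)).const_mul (C k)
  refine ((continuous_re.tendsto _).comp hlim).congr fun τ => ?_
  have hcont : Continuous fun t : ℝ => ∑ k ∈ K, C k * cexp (ν k * I * t) := by fun_prop
  have hint : ∀ k ∈ K, IntervalIntegrable (fun t : ℝ => C k * cexp (ν k * I * t))
      MeasureTheory.volume 0 τ := fun k _ => by
    apply Continuous.intervalIntegrable; fun_prop
  have hre := intervalIntegral.intervalIntegral_re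
    (hcont.intervalIntegrable (μ := MeasureTheory.volume) 0 τ)
  simp only [RCLike.re_to_complex] at hre
  rw [Function.comp_apply, hre, intervalIntegral.integral_finsetSum hint, ← re_ofReal_mul,
    Finset.mul_sum]
  simp_rw [intervalIntegral.integral_const_mul]
  exact congrArg re (Finset.sum_congr rfl fun k _ => by push_cast; ring)

lemma tendsto_average_frobSq_sum_smul {m κ : Type*} [Fintype m] (P : Finset κ) (β : κ → ℂ)
    (ω : κ → ℝ) (hω : Set.InjOn ω P) (R : κ → Matrix m m ℂ) :
    Tendsto (fun τ : ℝ => (1 / τ) * ∫ t in (0:ℝ)..τ,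
        frobSq (∑ p ∈ P, (β p * cexp (ω p * I * t)) • R p))
      atTop (𝓝 (∑ p ∈ P, ‖β p‖ ^ 2 * frobSq (R p))) := by
  set C : κ × κ → ℂ := fun q => β q.1 * conj (β q.2) * (R q.1 * (R q.2)ᴴ).trace
  have hexpand : ∀ t : ℝ, frobSq (∑ p ∈ P, (β p * cexp (ω p * I * t)) • R p) =
      (∑ q ∈ P ×ˢ P, C q * cexp ((ω q.1 - ω q.2 : ℝ) * I * t)).re := fun t => by
    rw [frobSq_sum_smul]
    congr 1
    refine Finset.sum_congr rfl fun q _ => ?_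
    rw [← exp_mul_I_mul_conj, map_mul]
    ring
  have hlimit : (∑ q ∈ P ×ˢ P, if ω q.1 - ω q.2 = 0 then C q else 0).re =
      ∑ p ∈ P, ‖β p‖ ^ 2 * frobSq (R p) := by
    rw [Finset.sum_product, re_sum]
    refine Finset.sum_congr rfl fun p hp => ?_
    rw [Finset.sum_eq_single_of_mem p hp fun q hq hqp => if_neg fun h =>
        hqp (hω hq hp (sub_eq_zero.mp h).symm), if_pos (sub_self _),
      frobSq_eq_re_trace_mul_conjTranspose]
    simp only [C, mul_conj, ← normSq_eq_norm_sq, re_ofReal_mul]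
  simpa only [hexpand, hlimit] using tendsto_average_re_sum_mul_exp (P ×ˢ P) C
    fun q => ω q.1 - ω q.2

end TimeAverage

section Eigenbasis

variable {n : Type*} [Fintype n] [DecidableEq n] {H : Matrix n n ℂ} {E : n → ℝ} {v : n → n → ℂ}

lemma conjTranspose_mul_self_of_orthonormal
    (horth : ∀ j j', star (v j) ⬝ᵥ v j' = if j = j' then (1 : ℂ) else 0) :
    (of v)ᵀᴴ * (of v)ᵀ = 1 := by
  ext j k
  simp only [mul_apply, conjTranspose_apply, transpose_apply, of_apply, one_apply, ← horth j k,
    dotProduct, Pi.star_apply]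

lemma mul_conjTranspose_self_of_orthonormal
    (horth : ∀ j j', star (v j) ⬝ᵥ v j' = if j = j' then (1 : ℂ) else 0) :
    (of v)ᵀ * (of v)ᵀᴴ = 1 :=
  mul_eq_one_comm.mp (conjTranspose_mul_self_of_orthonormal horth)

lemma eq_mul_diagonal_mul_conjTranspose
    (horth : ∀ j j', star (v j) ⬝ᵥ v j' = if j = j' then (1 : ℂ) else 0)
    (heig : ∀ j, H *ᵥ v j = (E j : ℂ) • v j) :
    H = (of v)ᵀ * diagonal (fun j => (E j : ℂ)) * (of v)ᵀᴴ := by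
  have hcols : H * (of v)ᵀ = (of v)ᵀ * diagonal (fun j => (E j : ℂ)) := by
    ext i j
    rw [mul_diagonal]
    simpa [mul_apply, mulVec, dotProduct, mul_comm] using congrFun (heig j) i
  rw [← hcols, Matrix.mul_assoc, mul_conjTranspose_self_of_orthonormal horth, Matrix.mul_one]

lemma charpoly_eq_prod_of_orthonormal_eigenbasis
    (horth : ∀ j j', star (v j) ⬝ᵥ v j' = if j = j' then (1 : ℂ) else 0)
    (heig : ∀ j, H *ᵥ v j = (E j : ℂ) • v j) :
    H.charpoly = ∏ j, (Polynomial.X - Polynomial.C (E j : ℂ)) := by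
  rw [eq_mul_diagonal_mul_conjTranspose horth heig, Matrix.mul_assoc, charpoly_mul_comm,
    Matrix.mul_assoc, conjTranspose_mul_self_of_orthonormal horth, Matrix.mul_one,
    charpoly_diagonal]

lemma roots_charpoly_of_orthonormal_eigenbasis
    (horth : ∀ j j', star (v j) ⬝ᵥ v j' = if j = j' then (1 : ℂ) else 0)
    (heig : ∀ j, H *ᵥ v j = (E j : ℂ) • v j) :
    H.charpoly.roots = Finset.univ.val.map fun j => (E j : ℂ) := by
  rw [charpoly_eq_prod_of_orthonormal_eigenbasis horth heig, Finset.prod_eq_multiset_prod,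
    show (fun j => Polynomial.X - Polynomial.C (E j : ℂ)) =
      (fun a => Polynomial.X - Polynomial.C a) ∘ (fun j => (E j : ℂ)) from rfl,
    ← Multiset.map_map, Polynomial.roots_multiset_prod_X_sub_C]

lemma injOn_sub_offDiag_of_nondegGaps
    (horth : ∀ j j', star (v j) ⬝ᵥ v j' = if j = j' then (1 : ℂ) else 0)
    (heig : ∀ j, H *ᵥ v j = (E j : ℂ) • v j) (hgap : NondegGaps H) :
    Set.InjOn (fun p : n × n => E p.2 - E p.1) (Finset.univ.offDiag : Finset (n × n)) := by
  have hroots := roots_charpoly_of_orthonormal_eigenbasis horth heig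
  have hmem : ∀ j, (E j : ℂ) ∈ H.charpoly.roots := fun j => by
    rw [hroots]; exact Multiset.mem_map_of_mem _ (Finset.mem_univ_val j)
  have hinj : Function.Injective E := fun j k hjk => by
    have hnodup := hgap.1
    rw [hroots, Multiset.nodup_map_iff_inj_on Finset.univ.nodup] at hnodup
    exact hnodup j (Finset.mem_univ_val j) k (Finset.mem_univ_val k) (by rw [hjk])
  have hne : ∀ {j k : n}, j ≠ k → (E j : ℂ) ≠ E k := fun h => by
    rw [Ne, ofReal_inj]; exact hinj.ne h
  intro p hp q hq hpq
  simp only [Finset.coe_offDiag, Set.mem_offDiag, Finset.coe_univ, Set.mem_univ, true_and]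
    at hp hq
  obtain ⟨h2, h1⟩ := hgap.2 _ (hmem p.2) _ (hmem p.1) _ (hmem q.2) _ (hmem q.1)
    (hne (Ne.symm hp)) (hne (Ne.symm hq)) (by exact_mod_cast hpq)
  exact Prod.ext (hinj (ofReal_inj.mp h1)) (hinj (ofReal_inj.mp h2))

lemma exp_smul_eq_of_orthonormal_eigenbasis
    (horth : ∀ j j', star (v j) ⬝ᵥ v j' = if j = j' then (1 : ℂ) else 0)
    (heig : ∀ j, H *ᵥ v j = (E j : ℂ) • v j) (c : ℂ) :
    NormedSpace.exp (c • H) = (of v)ᵀ * diagonal (fun j => cexp (c * E j)) * (of v)ᵀᴴ := by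
  have hunit : IsUnit (of v)ᵀ :=
    ⟨⟨_, _, mul_conjTranspose_self_of_orthonormal horth,
      conjTranspose_mul_self_of_orthonormal horth⟩, rfl⟩
  have hinv : ((of v)ᵀ)⁻¹ = (of v)ᵀᴴ :=
    inv_eq_right_inv (mul_conjTranspose_self_of_orthonormal horth)
  rw [eq_mul_diagonal_mul_conjTranspose horth heig, ← hinv, ← Matrix.smul_mul, ← Matrix.mul_smul,
    ← diagonal_smul, Matrix.exp_conj _ _ hunit, Matrix.exp_diagonal]
  congr 3
  funext j
  simp [Complex.exp_eq_exp_ℂ]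

end Eigenbasis

section Dynamics

variable {N : ℕ} {H : QOp N} {E : (Fin N → Bool) → ℝ}
  {v : (Fin N → Bool) → (Fin N → Bool) → ℂ}

lemma evolve_eq_sum (horth : ∀ j j', star (v j) ⬝ᵥ v j' = if j = j' then (1 : ℂ) else 0)
    (heig : ∀ j, H *ᵥ v j = (E j : ℂ) • v j) (t : ℝ) (φ : (Fin N → Bool) → ℂ) :
    evolve N H t φ = ∑ j, (cexp ((-E j : ℝ) * I * t) * (star (v j) ⬝ᵥ φ)) • v j := by
  rw [evolve, exp_smul_eq_of_orthonormal_eigenbasis horth heig, ← mulVec_mulVec,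
    ← mulVec_mulVec]
  ext u
  simp only [mulVec, dotProduct, transpose_apply, of_apply, conjTranspose_apply, diagonal_apply,
    ite_mul, zero_mul, Finset.sum_ite_eq, Finset.mem_univ, if_true, Finset.sum_apply,
    Pi.smul_apply, smul_eq_mul, Pi.star_apply]
  refine Finset.sum_congr rfl fun j _ => ?_
  rw [show -(t : ℂ) * I * E j = ((-E j : ℝ) : ℂ) * I * t by push_cast; ring]
  ring

lemma outer_sum_smul (a : (Fin N → Bool) → ℂ) :
    outer N (∑ j, a j • v j) = ∑ j, ∑ k, (a j * conj (a k)) • vecMulVec (v j) (star (v k)) := by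
  ext u w
  simp only [outer, vecMulVec_apply, Finset.sum_apply, Pi.smul_apply, Pi.star_apply, star_sum,
    star_smul, smul_eq_mul, Finset.sum_mul, Finset.mul_sum, Matrix.sum_apply, Matrix.smul_apply,
    RCLike.star_def]
  rw [Finset.sum_comm]
  exact Finset.sum_congr rfl fun j _ => Finset.sum_congr rfl fun k _ => by ring

lemma outer_evolve_sub_dephased
    (horth : ∀ j j', star (v j) ⬝ᵥ v j' = if j = j' then (1 : ℂ) else 0)
    (heig : ∀ j, H *ᵥ v j = (E j : ℂ) • v j) (t : ℝ) (φ : (Fin N → Bool) → ℂ) :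
    outer N (evolve N H t φ) - ∑ j, ((‖star (v j) ⬝ᵥ φ‖ ^ 2 : ℝ) : ℂ) • outer N (v j) =
      ∑ p ∈ Finset.univ.offDiag, ((star (v p.1) ⬝ᵥ φ) * conj (star (v p.2) ⬝ᵥ φ) *
        cexp ((E p.2 - E p.1 : ℝ) * I * t)) • vecMulVec (v p.1) (star (v p.2)) := by
  set c := fun j => star (v j) ⬝ᵥ φ
  have hphase : ∀ j k,
      cexp ((-E j : ℝ) * I * t) * c j * conj (cexp ((-E k : ℝ) * I * t) * c k) =
        c j * conj (c k) * cexp ((E k - E j : ℝ) * I * t) := fun j k => by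
    rw [map_mul, mul_mul_mul_comm, exp_mul_I_mul_conj, mul_comm, neg_sub_neg]
  rw [evolve_eq_sum horth heig, outer_sum_smul, ← Finset.sum_product' (f := fun j k =>
      (cexp ((-E j : ℝ) * I * t) * c j * conj (cexp ((-E k : ℝ) * I * t) * c k)) •
        vecMulVec (v j) (star (v k))),
    ← Finset.diag_union_offDiag, Finset.sum_union (Finset.disjoint_diag_offDiag _),
    Finset.sum_diag]
  simp only [hphase, sub_self, ofReal_zero, zero_mul, Complex.exp_zero, mul_one, mul_conj,
    normSq_eq_norm_sq, outer]
  exact add_sub_cancel_left _ _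

end Dynamics

section PartialMonomial

variable {n : Type*}

def IsPartialMonomial (M : Matrix n n ℂ) (S : n → Prop) (g : n → n) : Prop :=
  ∃ s : n → ℂ, (∀ w, ‖s w‖ = 1) ∧ ∀ u w, M u w = if S w ∧ u = g w then s w else 0

variable {M M' : Matrix n n ℂ} {S S' : n → Prop} {g g' : n → n}

lemma IsPartialMonomial.congr (h : IsPartialMonomial M S g) (hS : ∀ w, S w ↔ S' w)
    (hg : ∀ w, S w → g w = g' w) : IsPartialMonomial M S' g' := by
  obtain ⟨s, hs, hM⟩ := h
  refine ⟨s, hs, fun u w => ?_⟩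
  rw [hM]
  by_cases hw : S w
  · simp only [hw, (hS w).mp hw, hg w hw, true_and]
  · simp only [hw, (hS w).not.mp hw, false_and, if_false]

lemma isPartialMonomial_one [Fintype n] [DecidableEq n] :
    IsPartialMonomial (1 : Matrix n n ℂ) (fun _ => True) id :=
  ⟨fun _ => 1, fun _ => norm_one, fun u w => by simp [one_apply]⟩

lemma IsPartialMonomial.mul [Fintype n] (h : IsPartialMonomial M S g)
    (h' : IsPartialMonomial M' S' g') :
    IsPartialMonomial (M * M') (fun w => S' w ∧ S (g' w)) (g ∘ g') := by
  obtain ⟨s, hs, hM⟩ := h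
  obtain ⟨s', hs', hM'⟩ := h'
  refine ⟨fun w => s (g' w) * s' w, fun w => by rw [norm_mul, hs, hs', one_mul], fun u w => ?_⟩
  rw [mul_apply, Finset.sum_eq_single (g' w) (fun z _ hz => by simp [hM', hz]) (by simp)]
  by_cases hw : S' w <;> simp [hM, hM', hw]

lemma IsPartialMonomial.transpose (h : IsPartialMonomial M S g)
    (hinv : ∀ u w, S w ∧ u = g w ↔ S' u ∧ w = g' u) : IsPartialMonomial Mᵀ S' g' := by
  obtain ⟨s, hs, hM⟩ := h
  refine ⟨fun u => s (g' u), fun u => hs _, fun w u => ?_⟩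
  rw [transpose_apply, hM]
  by_cases huw : S' u ∧ w = g' u
  · rw [if_pos ((hinv u w).mpr huw), if_pos huw, huw.2]
  · rw [if_neg ((hinv u w).not.mpr huw), if_neg huw]

lemma IsPartialMonomial.conjTranspose (h : IsPartialMonomial M S g)
    (hinv : ∀ u w, S w ∧ u = g w ↔ S' u ∧ w = g' u) : IsPartialMonomial Mᴴ S' g' := by
  obtain ⟨s, hs, hM⟩ := h.transpose hinv
  refine ⟨fun u => star (s u), fun u => by rw [norm_star, hs], fun w u => ?_⟩
  rw [conjTranspose_apply, ← transpose_apply M, hM]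
  split_ifs <;> simp

lemma IsPartialMonomial.frobSq_mul [Fintype n] [DecidablePred S] (h : IsPartialMonomial M S g)
    (ρ : Matrix n n ℂ) : frobSq (ρ * M) = ∑ w with S w, ∑ v, ‖ρ v (g w)‖ ^ 2 := by
  obtain ⟨s, hs, hM⟩ := h
  have hentry : ∀ v w, (ρ * M) v w = if S w then ρ v (g w) * s w else 0 := fun v w => by
    rw [mul_apply, Finset.sum_eq_single (g w) (fun z _ hz => by simp [hM, hz]) (by simp)]
    by_cases hw : S w <;> simp [hM, hw]
  rw [frobSq, Finset.sum_comm, Finset.sum_filter]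
  refine Finset.sum_congr rfl fun w _ => ?_
  split_ifs with hw <;> simp [hentry, hw, hs]

lemma isPartialMonomial_list_prod {α β : Type*} [Fintype α] [DecidableEq α] [Fintype β]
    [DecidableEq β] (f : α → Matrix (α → β) (α → β) ℂ) (b b' : β)
    (hf : ∀ a, IsPartialMonomial (f a) (fun w => w a = b) (Function.update · a b')) :
    ∀ {l : List α}, l.Nodup → IsPartialMonomial (l.map f).prod (fun w => ∀ a ∈ l, w a = b)
      (fun w a => if a ∈ l then b' else w a)
  | [], _ => isPartialMonomial_one.congr (by simp) fun w _ => by simp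
  | a :: l, hl => by
    rw [List.nodup_cons] at hl
    refine ((hf a).mul (isPartialMonomial_list_prod f b b' hf hl.2)).congr (fun w => ?_)
      fun w _ => ?_
    · simp only [List.mem_cons, forall_eq_or_imp, if_neg hl.1]
      tauto
    · funext i
      by_cases hi : i = a <;> simp [hi]

end PartialMonomial

section Configurations

variable {α β γ : Type*}

lemma and_eq_update_comm [DecidableEq α] {a : α} {b b' : β} (u w : α → β) :
    w a = b ∧ u = Function.update w a b' ↔ u a = b' ∧ w = Function.update u a b := by
  constructor <;> rintro ⟨ha, rfl⟩ <;> simp [ha]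

variable {ι : α → β}

lemma extend_extend_of_comp_eq (hι : Function.Injective ι) {x y : α → γ} {w : β → γ}
    (hw : w ∘ ι = x) : Function.extend ι x (Function.extend ι y w) = w := by
  funext i
  by_cases hi : ∃ k, ι k = i
  · obtain ⟨k, rfl⟩ := hi
    rw [hι.extend_apply, ← hw, Function.comp_apply]
  · rw [Function.extend_apply' _ _ _ hi, Function.extend_apply' _ _ _ hi]

lemma comp_eq_and_eq_extend_comm (hι : Function.Injective ι) {x y : α → γ} {u w : β → γ} :
    w ∘ ι = x ∧ u = Function.extend ι y w ↔ u ∘ ι = y ∧ w = Function.extend ι x u := by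
  constructor <;> rintro ⟨h, rfl⟩ <;>
    exact ⟨Function.extend_comp hι _ _, (extend_extend_of_comp_eq hι h).symm⟩

lemma sum_fiber_extend [Fintype α] [Fintype β] [DecidableEq β] [Fintype γ] [DecidableEq γ]
    (hι : Function.Injective ι) (x y : α → γ) (f : (β → γ) → ℝ) :
    ∑ u with u ∘ ι = y, f (Function.extend ι x u) = ∑ w with w ∘ ι = x, f w := by
  refine Finset.sum_nbij' (Function.extend ι x) (Function.extend ι y) ?_ ?_ ?_ ?_ fun _ _ => rfl
  all_goals intro u hu
  all_goals simp only [Finset.mem_filter, Finset.mem_univ, true_and] at hu ⊢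
  · exact Function.extend_comp hι _ _
  · exact Function.extend_comp hι _ _
  · exact extend_extend_of_comp_eq hι hu
  · exact extend_extend_of_comp_eq hι hu

end Configurations

section JordanWigner

variable {N L : ℕ} {ι : Fin L → Fin N}

lemma isPartialMonomial_aOp (j : Fin N) :
    IsPartialMonomial (aOp N j) (fun w => w j = true) (Function.update · j false) := by
  refine ⟨fun w => ∏ i ∈ Finset.univ.filter (· < j), (if w i then (-1 : ℂ) else 1),
    fun w => ?_, fun u w => ?_⟩
  · rw [norm_prod]
    exact Finset.prod_eq_one fun i _ => by split <;> simp
  · rw [aOp]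
    congr 1
    simp only [Function.eq_update_iff, eq_comm (a := u _), eq_iff_iff]
    tauto

lemma isPartialMonomial_conjTranspose_aOp (j : Fin N) :
    IsPartialMonomial (aOp N j)ᴴ (fun w => w j = false) (Function.update · j true) :=
  (isPartialMonomial_aOp j).conjTranspose and_eq_update_comm

lemma isPartialMonomial_aOp_mul_conjTranspose (j : Fin N) :
    IsPartialMonomial (aOp N j * (aOp N j)ᴴ) (fun w => w j = false)
      (Function.update · j false) :=
  ((isPartialMonomial_aOp j).mul (isPartialMonomial_conjTranspose_aOp j)).congr (by simp)
    fun w _ => by simp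

lemma isPartialMonomial_hatUnit (hι : Function.Injective ι) (y x : Fin L → Bool) :
    IsPartialMonomial (hatUnit N L ι y x) (fun w => w ∘ ι = x) (Function.extend ι y) := by
  have hnodup : ∀ p : Fin L → Bool, (((List.finRange L).filter p).map ι).Nodup :=
    fun p => ((List.nodup_finRange L).filter _).map hι
  have hcreate := isPartialMonomial_list_prod (fun j => (aOp N j)ᴴ) false true
    isPartialMonomial_conjTranspose_aOp (hnodup y)
  have hvacuum := isPartialMonomial_list_prod (fun j => aOp N j * (aOp N j)ᴴ) false false
    isPartialMonomial_aOp_mul_conjTranspose ((List.nodup_finRange L).map hι)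
  have hannihilate := isPartialMonomial_list_prod (aOp N) true false isPartialMonomial_aOp
    (List.nodup_reverse.mpr (hnodup x))
  have hprod := (hcreate.mul hvacuum).mul hannihilate
  rw [List.map_map, List.map_map, List.map_reverse, List.map_map] at hprod
  rw [hatUnit]
  refine hprod.congr (fun w => ?_) fun w _ => ?_
  -- the annihilators need occupation `1` on the modes with `x k`, the vacuum projectors
  -- then need `0` on all the other modes of `ι`
  · simp only [List.mem_map, List.mem_filter, List.mem_finRange, List.mem_reverse, true_and,
      forall_exists_index, and_imp, forall_apply_eq_imp_iff, forall_apply_eq_imp_iff₂,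
      hι.eq_iff, exists_eq_right, funext_iff, Function.comp_apply]
    refine ⟨fun ⟨hx, hnx, _⟩ k => ?_,
      fun h => ⟨fun k hk => (h k).trans hk, fun k => ?_, fun _ _ => by simp⟩⟩
    · cases hxk : x k
      · simpa [hxk] using hnx k
      · exact hx k hxk
    · cases hxk : x k <;> simp [hxk, h k]
  · funext i
    by_cases hi : ∃ k, ι k = i
    · obtain ⟨k, rfl⟩ := hi
      cases hy : y k <;> simp [hι.extend_apply, hι.eq_iff, hy]
    · rw [Function.extend_apply' _ _ _ hi]
      simp [not_exists.mp hi]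

lemma frobSq_mul_hatUnit (hι : Function.Injective ι) (x y : Fin L → Bool) (ρ : QOp N) :
    frobSq (ρ * hatUnit N L ι y x) = ∑ u with u ∘ ι = y, ∑ v, ‖ρ v u‖ ^ 2 := by
  rw [(isPartialMonomial_hatUnit hι y x).frobSq_mul]
  exact sum_fiber_extend hι y x fun u => ∑ v, ‖ρ v u‖ ^ 2

lemma frobSq_hatUnit_mul (hι : Function.Injective ι) (x y : Fin L → Bool) (ρ : QOp N) :
    frobSq (hatUnit N L ι y x * ρ) = ∑ w with w ∘ ι = x, ∑ v, ‖ρ w v‖ ^ 2 := by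
  have h := (isPartialMonomial_hatUnit hι y x).transpose fun u w => comp_eq_and_eq_extend_comm hι
  rw [← frobSq_transpose, transpose_mul, h.frobSq_mul]
  simpa only [transpose_apply] using sum_fiber_extend hι x y fun w => ∑ v, ‖ρ w v‖ ^ 2

lemma sum_sum_frobSq_hatUnit_mul_add_frobSq_mul_hatUnit (hι : Function.Injective ι)
    (ρ : QOp N) :
    ∑ x : Fin L → Bool, ∑ y : Fin L → Bool,
      (frobSq (hatUnit N L ι y x * ρ) + frobSq (ρ * hatUnit N L ι y x)) / 2 =
      2 ^ L * frobSq ρ := by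
  simp only [frobSq_hatUnit_mul hι, frobSq_mul_hatUnit hι, add_div, Finset.sum_add_distrib,
    Finset.sum_const, Finset.card_univ, Fintype.card_fun, Fintype.card_bool, Fintype.card_fin,
    nsmul_eq_mul, ← Finset.sum_div, ← Finset.mul_sum]
  rw [Finset.sum_fiberwise, Finset.sum_fiberwise, Finset.sum_comm (f := fun u v => ‖ρ v u‖ ^ 2)]
  push_cast
  unfold frobSq
  ring

end JordanWigner

section ReducedDensityMatrix

variable {N L : ℕ} (A : Finset (Fin N)) (hA : A.card = L)

def fermRDMLinearMap : QOp N →ₗ[ℂ] Matrix (Fin L → Bool) (Fin L → Bool) ℂ where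
  toFun := fermRDM N L A hA
  map_add' ρ σ := by ext x y; simp [fermRDM, Matrix.add_mul]
  map_smul' a ρ := by ext x y; simp [fermRDM]

lemma fermRDMLinearMap_apply (ρ : QOp N) : fermRDMLinearMap A hA ρ = fermRDM N L A hA ρ := rfl

lemma fermRDM_outer_evolve_sub_dephased {H : QOp N} {E : (Fin N → Bool) → ℝ}
    {v : (Fin N → Bool) → (Fin N → Bool) → ℂ}
    (horth : ∀ j j', star (v j) ⬝ᵥ v j' = if j = j' then (1 : ℂ) else 0)
    (heig : ∀ j, H *ᵥ v j = (E j : ℂ) • v j) (t : ℝ) (φ : (Fin N → Bool) → ℂ) :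
    fermRDM N L A hA (outer N (evolve N H t φ)) -
        fermRDM N L A hA (∑ j, ((‖star (v j) ⬝ᵥ φ‖ ^ 2 : ℝ) : ℂ) • outer N (v j)) =
      ∑ p ∈ Finset.univ.offDiag, ((star (v p.1) ⬝ᵥ φ) * conj (star (v p.2) ⬝ᵥ φ) *
        cexp ((E p.2 - E p.1 : ℝ) * I * t)) •
          fermRDM N L A hA (vecMulVec (v p.1) (star (v p.2))) := by
  rw [← fermRDMLinearMap_apply, ← fermRDMLinearMap_apply, ← map_sub,
    outer_evolve_sub_dephased horth heig, map_sum]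
  simp only [map_smul, fermRDMLinearMap_apply]

lemma sum_sum_mul_frobSq_fermRDM_le {κ : Type*} [Fintype κ] (p : κ → ℝ)
    (v : κ → (Fin N → Bool) → ℂ) :
    ∑ j, ∑ k, p j * p k * frobSq (fermRDM N L A hA (vecMulVec (v j) (star (v k)))) ≤
      2 ^ L * frobSq (∑ j, (p j : ℂ) • vecMulVec (v j) (star (v j))) := by
  set ρ := ∑ j, (p j : ℂ) • vecMulVec (v j) (star (v j))
  set X := hatUnit N L fun k => A.orderEmbOfFin hA k
  calc ∑ j, ∑ k, p j * p k * frobSq (fermRDM N L A hA (vecMulVec (v j) (star (v k))))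
      = ∑ x, ∑ y, ((X y x * ρ)ᴴ * (ρ * X y x)).trace.re := by
        simp only [ρ, re_trace_conjTranspose_mul_eq_sum_sum]
        simp only [frobSq, fermRDM, Finset.mul_sum]
        exact (Finset.sum_congr rfl fun j _ => Finset.sum_comm.trans
          (Finset.sum_congr rfl fun x _ => Finset.sum_comm)).trans
          (Finset.sum_comm.trans (Finset.sum_congr rfl fun x _ => Finset.sum_comm))
    _ ≤ ∑ x, ∑ y, (frobSq (X y x * ρ) + frobSq (ρ * X y x)) / 2 :=
        Finset.sum_le_sum fun x _ => Finset.sum_le_sum fun y _ => re_trace_conjTranspose_mul_le _ _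
    _ = 2 ^ L * frobSq ρ :=
        sum_sum_frobSq_hatUnit_mul_add_frobSq_mul_hatUnit (A.orderEmbOfFin hA).injective ρ

lemma sum_offDiag_mul_frobSq_fermRDM_le {κ : Type*} [Fintype κ] [DecidableEq κ]
    {v : κ → (Fin N → Bool) → ℂ}
    (horth : ∀ j j', star (v j) ⬝ᵥ v j' = if j = j' then (1 : ℂ) else 0) (c : κ → ℂ) :
    ∑ p ∈ Finset.univ.offDiag, ‖c p.1 * conj (c p.2)‖ ^ 2 *
        frobSq (fermRDM N L A hA (vecMulVec (v p.1) (star (v p.2)))) ≤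
      2 ^ L * ∑ j, ‖c j‖ ^ 4 := by
  calc ∑ p ∈ Finset.univ.offDiag, ‖c p.1 * conj (c p.2)‖ ^ 2 *
        frobSq (fermRDM N L A hA (vecMulVec (v p.1) (star (v p.2))))
      ≤ ∑ j, ∑ k, ‖c j‖ ^ 2 * ‖c k‖ ^ 2 *
          frobSq (fermRDM N L A hA (vecMulVec (v j) (star (v k)))) := by
        rw [← Finset.sum_product', Finset.univ_product_univ]
        simp only [norm_mul, RCLike.norm_conj, mul_pow]
        exact Finset.sum_le_sum_of_subset_of_nonneg (Finset.subset_univ _) fun p _ _ =>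
          mul_nonneg (by positivity) (frobSq_nonneg _)
    _ ≤ 2 ^ L * frobSq (∑ j, ((‖c j‖ ^ 2 : ℝ) : ℂ) • vecMulVec (v j) (star (v j))) :=
        sum_sum_mul_frobSq_fermRDM_le A hA (fun j => ‖c j‖ ^ 2) v
    _ = 2 ^ L * ∑ j, ‖c j‖ ^ 4 := by
        rw [frobSq_sum_smul_vecMulVec_of_orthonormal horth]
        simp [← pow_mul]

end ReducedDensityMatrix

theorem subsystem_equilibration_frobenius_general (N L : ℕ) (A : Finset (Fin N)) (hA : A.card = L)
    (H : QOp N) (hgap : NondegGaps H)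
    (E : (Fin N → Bool) → ℝ) (v : (Fin N → Bool) → ((Fin N → Bool) → ℂ))
    (horth : ∀ j j', star (v j) ⬝ᵥ v j' = if j = j' then (1 : ℂ) else 0)
    (heig : ∀ j, H *ᵥ v j = (E j : ℂ) • v j)
    (φ : (Fin N → Bool) → ℂ) :
    Filter.limsup (fun τ : ℝ => (1 / τ) * ∫ t in (0:ℝ)..τ,
        frobSq (fermRDM N L A hA (outer N (evolve N H t φ)) -
          fermRDM N L A hA
            (∑ j, ((‖star (v j) ⬝ᵥ φ‖ ^ 2 : ℝ) : ℂ) • outer N (v j))))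
      Filter.atTop ≤
      (2 ^ L : ℝ) / (∑ j, ‖star (v j) ⬝ᵥ φ‖ ^ 4)⁻¹ := by
  simp_rw [fermRDM_outer_evolve_sub_dephased A hA horth heig]
  have hlim := tendsto_average_frobSq_sum_smul Finset.univ.offDiag
    (fun p : _ × _ => (star (v p.1) ⬝ᵥ φ) * conj (star (v p.2) ⬝ᵥ φ)) (fun p => E p.2 - E p.1)
    (injOn_sub_offDiag_of_nondegGaps horth heig hgap)
    fun p => fermRDM N L A hA (vecMulVec (v p.1) (star (v p.2)))
  rw [hlim.limsup_eq, div_inv_eq_mul]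
  exact sum_offDiag_mul_frobSq_fermRDM_le A hA horth fun j => star (v j) ⬝ᵥ φ

/-- Equilibration of the fermionic reduced density matrix in Frobenius norm:
`limsup_{τ→∞} (1/τ)∫₀^τ ‖ρ(t)_A − ρ̄_A‖₂² dt ≤ 2^L / D_eff`. -/
theorem subsystem_equilibration_frobenius (N L : ℕ) (A : Finset (Fin N)) (hA : A.card = L)
    (H : QOp N) (hH : H.IsHermitian) (hgap : NondegGaps H)
    (E : (Fin N → Bool) → ℝ) (v : (Fin N → Bool) → ((Fin N → Bool) → ℂ))
    (horth : ∀ j j', star (v j) ⬝ᵥ v j' = if j = j' then (1 : ℂ) else 0)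
    (heig : ∀ j, H *ᵥ v j = (E j : ℂ) • v j)
    (φ : (Fin N → Bool) → ℂ) (hφ : star φ ⬝ᵥ φ = 1) :
    Filter.limsup (fun τ : ℝ => (1 / τ) * ∫ t in (0:ℝ)..τ,
        frobSq (fermRDM N L A hA (outer N (evolve N H t φ)) -
          fermRDM N L A hA
            (∑ j, ((‖star (v j) ⬝ᵥ φ‖ ^ 2 : ℝ) : ℂ) • outer N (v j))))
      Filter.atTop ≤
      (2 ^ L : ℝ) / (∑ j, ‖star (v j) ⬝ᵥ φ‖ ^ 4)⁻¹ :=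
  subsystem_equilibration_frobenius_general N L A hA H hgap E v horth heig φ

end
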